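/- arXiv:1608.08449 — 5 statements merged into one kernel-verified Lean document; each statement's English description precedes it below -/
import Mathlib

section
/- Let E be a 2×2 complex matrix satisfying E² = (-A² - A⁻²)E for a nonzero complex number A, and let S = A·E + A⁻¹·I. Then for every positive integer m, Sᵐ = P_m(A)·E + A⁻ᵐ·I, where P_m(A) = A^{2-m}(1 - A⁴ + A⁸ - ... + (-1)^{m-1}A^{4m-4}). -/
/-!
Right multiplication by `S = a • E + b • 1` maps `E` to `(a c + b) • E` when `E * E = c • E`, so
the powers of `S` stay in the span of `E` and `1`: `S ^ m = p m • E + b ^ m • 1` with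
`p (m + 1) = (a c + b) p m + a b ^ m`. For `a = A`, `b = A⁻¹`, `c = -A² - A⁻²` this reads
`p (m + 1) = -A³ p m + A^(1-m)`, and `P_m(A)` (`twistCoeff A m`) satisfies the same recurrence.
-/

open Finset

theorem pow_smul_add_smul_one_of_mul_self_eq_smul {K R : Type*} [CommSemiring K] [Semiring R]
    [Algebra K R] {E : R} {c : K} (hE : E * E = c • E) (a b : K) {p : ℕ → K} (hp0 : p 0 = 0)
    (hp : ∀ m, p (m + 1) = (a * c + b) * p m + a * b ^ m) (m : ℕ) :
    (a • E + b • (1 : R)) ^ m = p m • E + b ^ m • (1 : R) := by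
  induction m with
  | zero => simp [hp0]
  | succ m ih =>
    rw [pow_succ, ih, hp]
    simp only [add_mul, mul_add, smul_mul_smul_comm, hE, smul_smul, mul_one, one_mul, pow_succ]
    match_scalars <;> ring

section TwistCoeff

variable {K : Type*} [Field K]

noncomputable def twistCoeff (A : K) (m : ℕ) : K :=
  A ^ ((2 : ℤ) - m) * ∑ k ∈ range m, (-1) ^ k * A ^ (4 * k)

theorem twistCoeff_zero (A : K) : twistCoeff A 0 = 0 := by
  simp [twistCoeff]

theorem twistCoeff_succ {A : K} (hA : A ≠ 0) (m : ℕ) :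
    twistCoeff A (m + 1) = -A ^ 3 * twistCoeff A m + A * A⁻¹ ^ m := by
  have hsum : ∑ k ∈ range (m + 1), (-1 : K) ^ k * A ^ (4 * k)
      = -A ^ 4 * ∑ k ∈ range m, (-1 : K) ^ k * A ^ (4 * k) + 1 := by
    rw [sum_range_succ', mul_sum]
    simp only [pow_succ, mul_add, mul_one, pow_zero, mul_zero]
    congr 1
    exact sum_congr rfl fun k _ => by ring
  have hexp : A ^ ((2 : ℤ) - (m + 1 : ℕ)) = A⁻¹ * A ^ ((2 : ℤ) - m) := by
    rw [Nat.cast_succ, sub_add_eq_sub_sub, zpow_sub₀ hA, zpow_one, div_eq_inv_mul]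
  have hlow : A⁻¹ * A ^ ((2 : ℤ) - m) = A * A⁻¹ ^ m := by
    rw [zpow_sub₀ hA, zpow_natCast, inv_pow]
    field_simp
  rw [twistCoeff, twistCoeff, hsum, hexp, ← hlow]
  field_simp

end TwistCoeff

theorem stmt_0 (A : ℂ) (hA : A ≠ 0) (E : Matrix (Fin 2) (Fin 2) ℂ)
    (hE : E * E = (-A ^ 2 - (A ^ 2)⁻¹) • E)
    (S : Matrix (Fin 2) (Fin 2) ℂ) (hS : S = A • E + A⁻¹ • (1 : Matrix (Fin 2) (Fin 2) ℂ)) :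
    ∀ m : ℕ, 1 ≤ m →
      S ^ m = (A ^ ((2 : ℤ) - m) * ∑ k ∈ Finset.range m, (-1 : ℂ) ^ k * A ^ (4 * k)) • E
        + (A ^ (-(m : ℤ))) • (1 : Matrix (Fin 2) (Fin 2) ℂ) := by
  intro m _
  have hcoeff : A * (-A ^ 2 - (A ^ 2)⁻¹) + A⁻¹ = -A ^ 3 := by
    field_simp
    ring
  rw [hS, zpow_neg, zpow_natCast, ← inv_pow]
  exact pow_smul_add_smul_one_of_mul_self_eq_smul hE A A⁻¹ (twistCoeff_zero A)
    (fun n => hcoeff ▸ twistCoeff_succ hA n) m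
end

section
/- Let A be a nonzero complex number and let E be an element of a complex algebra with identity satisfying E² = (-A² - A⁻²)E. If P_m(A) = 0, where P_m(A) = A^{2-m}·∑_{k=0}^{m-1}(-1)^k A^{4k}, then (A·E + A⁻¹·1)ᵐ = A⁻ᵐ·1, i.e., the m-th power of A·E + A⁻¹ is a scalar. -/
/-! With `F = A² • E` we have `F * F = (-A⁴ - 1) • F` and `A • (A • E + A⁻¹) = 1 + F`. For any
`F` with `F * F = c • F`, `(1 + F) ^ m = 1 + (∑ k < m, (c + 1) ^ k) • F`; here `c + 1 = -A⁴`, so the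
coefficient is `∑ k < m, (-1) ^ k A ^ (4k)`, which vanishes because `P_m(A) = 0`. -/

open Finset

theorem one_add_pow_of_mul_self_eq_smul {S R : Type*} [CommSemiring S] [Semiring R] [Algebra S R]
    {F : R} {c : S} (hF : F * F = c • F) (n : ℕ) :
    (1 + F) ^ n = 1 + (∑ k ∈ range n, (c + 1) ^ k) • F := by
  induction n with
  | zero => simp
  | succ n ih =>
    rw [pow_succ, ih, geom_sum_succ]
    simp only [add_mul, mul_add, one_mul, mul_one, smul_mul_assoc, hF, smul_smul]
    match_scalars <;> ring

theorem stmt_1_general (A : ℂ) (hA : A ≠ 0) (R : Type*) [Ring R] [Algebra ℂ R] (E : R)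
    (hE : E * E = (-A ^ 2 - (A ^ 2)⁻¹) • E)
    (m : ℕ)
    (hP : A ^ ((2 : ℤ) - m) * ∑ k ∈ Finset.range m, (-1 : ℂ) ^ k * A ^ (4 * k) = 0) :
    (A • E + algebraMap ℂ R A⁻¹) ^ m = algebraMap ℂ R (A⁻¹ ^ m) := by
  have hsum : ∑ k ∈ range m, (-A ^ 4 - 1 + 1) ^ k = 0 := by
    rw [sub_add_cancel]
    simp_rw [neg_pow (A ^ 4), ← pow_mul]
    exact (mul_eq_zero.mp hP).resolve_left (zpow_ne_zero _ hA)
  have hF : (A ^ 2 • E) * (A ^ 2 • E) = (-A ^ 4 - 1) • (A ^ 2 • E) := by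
    rw [smul_mul_smul_comm, hE, smul_smul, smul_smul]
    congr 1
    field_simp
  have hX : A • E + algebraMap ℂ R A⁻¹ = A⁻¹ • (1 + A ^ 2 • E) := by
    rw [smul_add, smul_smul, Algebra.algebraMap_eq_smul_one, add_comm]
    congr 2
    field_simp
  rw [hX, smul_pow, one_add_pow_of_mul_self_eq_smul hF, hsum, zero_smul, add_zero,
    Algebra.algebraMap_eq_smul_one]

theorem stmt_1 (A : ℂ) (hA : A ≠ 0) (R : Type*) [Ring R] [Algebra ℂ R] (E : R)
    (hE : E * E = (-A ^ 2 - (A ^ 2)⁻¹) • E)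
    (m : ℕ) (hm : 1 ≤ m)
    (hP : A ^ ((2 : ℤ) - m) * ∑ k ∈ Finset.range m, (-1 : ℂ) ^ k * A ^ (4 * k) = 0) :
    (A • E + algebraMap ℂ R A⁻¹) ^ m = algebraMap ℂ R (A⁻¹ ^ m) :=
  stmt_1_general A hA R E hE m hP
end

section
/- Let r ≥ 5 with r ∉ {6, 10}. Then there exists a primitive r-th root of unity q ∈ ℂ such that |2 - q - q⁻¹ + q² + q⁻²| > 2. -/
/-!
Take `q = exp (2πik/r)` with `k` coprime to `r` and `r/3 < k ≤ r/2`; such a `k` exists for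
`r ≥ 5`, `r ∉ {6, 10}` (write `r = 2k + d` with `d ∈ {1, 2, 4}`). With `x = q + q⁻¹ = 2 cos (2πk/r)`
the expression equals `x² - x`, and the choice of `k` forces `x < -1`, whence `x² - x > 2`.
-/

open Real Complex

theorem Nat.exists_coprime_gt_third_le_half {r : ℕ} (hr : 5 ≤ r) (h6 : r ≠ 6)
    (h10 : r ≠ 10) : ∃ k : ℕ, k.Coprime r ∧ r < 3 * k ∧ 2 * k ≤ r := by
  obtain ⟨n, rfl | rfl⟩ := Nat.even_or_odd' r
  · obtain ⟨t, rfl | rfl⟩ := Nat.even_or_odd' n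
    · have hodd : Odd (2 * t - 1) := ⟨t - 1, by omega⟩
      refine ⟨2 * t - 1, ?_, by omega, by omega⟩
      rw [show 2 * (2 * t) = (2 * t - 1) * 2 + 2 by omega, Nat.coprime_mul_left_add_right]
      exact Nat.coprime_two_right.mpr hodd
    · have hodd : Odd (2 * t - 1) := ⟨t - 1, by omega⟩
      refine ⟨2 * t - 1, ?_, by omega, by omega⟩
      rw [show 2 * (2 * t + 1) = (2 * t - 1) * 2 + 2 ^ 2 by omega, Nat.coprime_mul_left_add_right]
      exact (Nat.coprime_two_right.mpr hodd).pow_right 2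
  · refine ⟨n, ?_, by omega, by omega⟩
    rw [mul_comm, Nat.coprime_mul_left_add_right]
    exact Nat.coprime_one_right n

theorem Real.cos_lt_neg_half {θ : ℝ} (h₁ : 2 * π / 3 < θ) (h₂ : θ ≤ π) : cos θ < -(1 / 2) :=
  calc cos θ < cos (π - π / 3) :=
        cos_lt_cos_of_nonneg_of_le_pi (by linarith [pi_pos]) h₂ (by linarith)
    _ = -(1 / 2) := by rw [cos_pi_sub, cos_pi_div_three]

theorem Real.cos_two_pi_mul_div_lt_neg_half {k r : ℕ} (h₁ : r < 3 * k) (h₂ : 2 * k ≤ r) :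
    cos (2 * π * k / r) < -(1 / 2) := by
  have hr : (0 : ℝ) < r := by exact_mod_cast (show 0 < r by omega)
  have h₁' : (r : ℝ) < 3 * k := by exact_mod_cast h₁
  have h₂' : 2 * (k : ℝ) ≤ r := by exact_mod_cast h₂
  apply cos_lt_neg_half
  · rw [div_lt_div_iff₀ (by norm_num) hr]
    nlinarith [pi_pos]
  · rw [div_le_iff₀ hr]
    nlinarith [pi_pos]

theorem two_sub_add_inv_add_sq_add_inv_sq {K : Type*} [Field K] {q : K} (hq : q ≠ 0) :
    2 - q - q⁻¹ + q ^ 2 + (q ^ 2)⁻¹ = (q + q⁻¹) ^ 2 - (q + q⁻¹) := by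
  field_simp
  ring

theorem Complex.exp_mul_I_add_inv (θ : ℝ) :
    exp (θ * I) + (exp (θ * I))⁻¹ = ((2 * Real.cos θ : ℝ) : ℂ) := by
  rw [← exp_neg, ← neg_mul, ← two_cos]
  push_cast
  rfl

theorem two_lt_sq_sub_self {x : ℝ} (hx : x < -1) : 2 < x ^ 2 - x := by
  nlinarith

theorem stmt_8 (r : ℕ) (hr : 5 ≤ r) (h6 : r ≠ 6) (h10 : r ≠ 10) :
    ∃ q : ℂ, IsPrimitiveRoot q r ∧
      2 < ‖2 - q - q⁻¹ + q ^ 2 + (q ^ 2)⁻¹‖ := by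
  obtain ⟨k, hcop, h₁, h₂⟩ := Nat.exists_coprime_gt_third_le_half hr h6 h10
  set θ : ℝ := 2 * π * k / r
  refine ⟨exp (θ * I), ?_, ?_⟩
  · convert isPrimitiveRoot_exp_of_coprime k r (by omega) hcop using 2
    push_cast [θ]
    ring
  · have hx : 2 * Real.cos θ < -1 := by linarith [cos_two_pi_mul_div_lt_neg_half h₁ h₂]
    rw [two_sub_add_inv_add_sq_add_inv_sq (Complex.exp_ne_zero _), exp_mul_I_add_inv, ← ofReal_pow,
      ← ofReal_sub, norm_real, Real.norm_eq_abs]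
    exact (two_lt_sq_sub_self hx).trans_le (le_abs_self _)
end

section
/- Let q be a primitive third root of unity. Then 2 - q - q⁻¹ + q² + q⁻² = 2, and the matrix M = [[2 - A⁴ - A⁻⁴ + A⁸, -A⁻² + A⁻⁶],[A⁻² - A⁻⁶, A⁻⁸]] with A⁴ = q is not the identity matrix; hence M has infinite order in PGL₂(ℂ). -/
/-!
The trace of `M` is `2 - q - q⁻¹ + q ^ 2 + q⁻²`, which equals `2` because `q ^ 3 = 1`, and its
determinant is identically `1`; so by Cayley–Hamilton it is unipotent: `(M - 1) ^ 2 = 0`. Hence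
`M ^ n = 1 + n • (M - 1)`, whose off-diagonal entry `n • M 1 0` vanishes only for `n = 0`,
because `M 1 0 = A⁻² - A⁻⁶` is nonzero as `A ^ 4 = q ≠ 1`.
-/

theorem pow_eq_one_add_nsmul_of_sq_sub_one_eq_zero {R : Type*} [Ring R] {x : R}
    (hx : (x - 1) ^ 2 = 0) (n : ℕ) : x ^ n = 1 + n • (x - 1) := by
  induction n with
  | zero => simp
  | succ n ih =>
    have hxx : (x - 1) * x = x - 1 := by
      calc (x - 1) * x = (x - 1) ^ 2 + (x - 1) := by noncomm_ring
        _ = x - 1 := by rw [hx, zero_add]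
    rw [pow_succ, ih, add_mul, one_mul, smul_mul_assoc, hxx, succ_nsmul]
    abel

theorem sub_inv_add_sq_add_inv_sq_of_pow_three_eq_one {K : Type*} [Field K] {q : K}
    (hq : q ^ 3 = 1) : 2 - q - q⁻¹ + q ^ 2 + (q ^ 2)⁻¹ = 2 := by
  have hq0 : q ≠ 0 := by rintro rfl; norm_num at hq
  field_simp
  linear_combination (q - 1) * hq

namespace Matrix

theorem sq_sub_one_eq_zero_of_trace_eq_two_of_det_eq_one {R : Type*} [CommRing R]
    {M : Matrix (Fin 2) (Fin 2) R} (htr : M.trace = 2) (hdet : M.det = 1) :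
    (M - 1) ^ 2 = 0 := by
  rw [trace_fin_two] at htr
  rw [det_fin_two] at hdet
  ext i j
  fin_cases i <;> fin_cases j <;>
    simp only [Fin.zero_eta, Fin.mk_one, Fin.isValue, sq, mul_apply, sub_apply, one_apply,
      Fin.sum_univ_two, zero_ne_one, one_ne_zero, if_true, if_false, sub_zero, zero_apply]
  · linear_combination M 0 0 * htr - hdet
  · linear_combination M 0 1 * htr
  · linear_combination M 1 0 * htr
  · linear_combination M 1 1 * htr - hdet

variable {n R : Type*} [DecidableEq n] [Ring R] {M : Matrix n n R} {i j : n}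

theorem ne_one_of_apply_ne_zero (hij : i ≠ j) (hM : M i j ≠ 0) : M ≠ 1 := by
  rintro rfl
  exact hM (one_apply_ne hij)

theorem pow_ne_smul_one_of_sq_sub_one_eq_zero [Fintype n] [IsAddTorsionFree R]
    (hM : (M - 1) ^ 2 = 0) (hij : i ≠ j) (hMij : M i j ≠ 0) {N : ℕ} (hN : N ≠ 0) (c : R) : M ^ N ≠ c • 1 := by
  intro h
  have hentry := congrFun (congrFun h i) j
  rw [pow_eq_one_add_nsmul_of_sq_sub_one_eq_zero hM] at hentry
  simp only [add_apply, smul_apply, sub_apply, one_apply_ne hij, smul_zero, zero_add,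
    sub_zero] at hentry
  exact hMij ((nsmul_eq_zero_iff_right hN).mp hentry)

end Matrix

open Matrix in
theorem stmt_11 (A : ℂ) (hA : A ≠ 0) (q : ℂ) (hq : q = A ^ 4)
    (hprim : IsPrimitiveRoot q 3)
    (M : Matrix (Fin 2) (Fin 2) ℂ)
    (hM : M = !![2 - A ^ 4 - (A ^ 4)⁻¹ + A ^ 8, -(A ^ 2)⁻¹ + (A ^ 6)⁻¹;
       (A ^ 2)⁻¹ - (A ^ 6)⁻¹, (A ^ 8)⁻¹]) :
    2 - q - q⁻¹ + q ^ 2 + (q ^ 2)⁻¹ = 2 ∧ M ≠ 1 ∧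
    ∀ N : ℕ, 0 < N → ∀ c : ℂ, M ^ N ≠ c • (1 : Matrix (Fin 2) (Fin 2) ℂ) := by
  have hq3 : q ^ 3 = 1 := hprim.pow_eq_one
  have htrace := sub_inv_add_sq_add_inv_sq_of_pow_three_eq_one hq3
  have hMtr : M.trace = 2 - q - q⁻¹ + q ^ 2 + (q ^ 2)⁻¹ := by
    rw [hM, trace_fin_two_of, hq]
    ring
  have hMdet : M.det = 1 := by
    rw [hM, det_fin_two_of]
    field_simp
    ring
  have hM10 : M 1 0 ≠ 0 := by
    have hq1 : A ^ 4 ≠ 1 := hq ▸ hprim.ne_one (by norm_num)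
    simp only [hM, of_apply, cons_val_one, cons_val_zero]
    rw [sub_ne_zero, Ne, _root_.inv_inj]
    exact fun h => hq1 (mul_left_cancel₀ (pow_ne_zero 2 hA) (by linear_combination -h))
  have hunip := sq_sub_one_eq_zero_of_trace_eq_two_of_det_eq_one (hMtr.trans htrace) hMdet
  exact ⟨htrace, ne_one_of_apply_ne_zero one_ne_zero hM10,
    fun N hN c => pow_ne_smul_one_of_sq_sub_one_eq_zero hunip one_ne_zero hM10 hN.ne' c⟩
end

section
/- Let A ∈ ℂ* and S₁ = [[-A³, A],[0,A⁻¹]], S₂ = [[A⁻¹, 0],[A, -A³]]. If q = A⁴ has multiplicative order r ≥ 3 with r ∉ {4,6,10}, then the image of S₁²S₂⁻² in PGL₂(ℂ) has infinite order, i.e., no positive power of S₁²S₂⁻² is a scalar matrix. -/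
/-!
Write `q = A⁴` and `M = S₁² S₂⁻²`. A direct computation shows `det M = 1`, `M₀₁ = (1 - q) A⁻⁶ ≠ 0`
and `tr M = s² - s` with `s = q + q⁻¹`. Since `M² = (tr M) M - 1`, the powers of `M` are
`M^(n+1) = Sₙ(tr M) M - Sₙ₋₁(tr M)` for the rescaled Chebyshev polynomials `Sₙ`; so if `M^N` is
scalar then `S_{N-1}(tr M) = 0`, which forces an eigenvalue `l` of `M` to satisfy `l^(2N) = 1`,
`l² ≠ 1` and `l + l⁻¹ = s² - s`.

For `r = 3` we have `s = -1`, so `l + l⁻¹ = 2` and `l = 1`. Otherwise there is a primitive `r`-th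
root of unity `w` with `Re w < -1/2`, and a Galois automorphism of a cyclotomic field containing
`q` and `l` sends `q` to `w`. It turns the relation into `l' + l'⁻¹ = 4c² - 2c` with `c = Re w`
and `l'` a root of unity; but the right-hand side exceeds `2`, while `|l' + l'⁻¹| ≤ 2`.
-/

open Polynomial Polynomial.Chebyshev

theorem Polynomial.Chebyshev.S_eval_add_mul_sub {R : Type*} [CommRing R] {u v : R}
    (huv : u * v = 1) (n : ℕ) :
    (S R n).eval (u + v) * (u - v) = u ^ (n + 1) - v ^ (n + 1) := by
  induction n using Nat.twoStepInduction with
  | zero => simp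
  | one => simp; ring
  | more n ih₀ ih₁ =>
    push_cast at ih₁ ⊢
    rw [S_add_two, eval_sub, eval_mul, eval_X, sub_mul, mul_assoc, ih₁, ih₀]
    linear_combination (u ^ (n + 1) - v ^ (n + 1)) * huv

namespace Matrix

variable {R : Type*} [CommRing R]

theorem mul_self_fin_two_eq (M : Matrix (Fin 2) (Fin 2) R) :
    M * M = M.trace • M - M.det • 1 := by
  ext i j
  fin_cases i <;> fin_cases j <;> simp [trace_fin_two, det_fin_two, mul_apply] <;> ring

theorem pow_succ_eq_eval_S_smul_sub {M : Matrix (Fin 2) (Fin 2) R} (hdet : M.det = 1) (n : ℕ) :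
    M ^ (n + 1) = (S R n).eval M.trace • M - (S R (n - 1 : ℤ)).eval M.trace • 1 := by
  induction n with
  | zero => simp
  | succ n ih =>
    rw [pow_succ, ih, sub_mul, smul_mul_assoc, mul_self_fin_two_eq, hdet, smul_mul_assoc, one_mul,
      Nat.cast_succ, S_add_one, add_sub_cancel_right]
    simp only [eval_sub, eval_mul, eval_X]
    module

theorem eval_S_eq_zero_of_pow_eq_smul_one [IsDomain R] {M : Matrix (Fin 2) (Fin 2) R}
    (hdet : M.det = 1) (hM : M 0 1 ≠ 0) {n : ℕ} {c : R} (hc : M ^ (n + 1) = c • 1) :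
    (S R n).eval M.trace = 0 := by
  have h := congr_fun (congr_fun (pow_succ_eq_eval_S_smul_sub hdet n) 0) 1
  simpa [hc, hM] using h

theorem pow_two_mul_eq_one_of_pow_eq_smul_one {K : Type*} [Field K] [CharZero K]
    {M : Matrix (Fin 2) (Fin 2) K} (hdet : M.det = 1) (hM : M 0 1 ≠ 0) {N : ℕ} (hN : N ≠ 0)
    {c : K} (hc : M ^ N = c • 1) {l : K} (hl : l ≠ 0) (ht : M.trace = l + l⁻¹) :
    l ^ (2 * N) = 1 ∧ l ^ 2 ≠ 1 := by
  obtain ⟨n, rfl⟩ := Nat.exists_eq_succ_of_ne_zero hN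
  have hS := eval_S_eq_zero_of_pow_eq_smul_one hdet hM hc
  rw [ht] at hS
  have hl2 : l ^ 2 ≠ 1 := by
    intro h
    rcases sq_eq_one_iff.mp h with rfl | rfl <;> norm_num at hS <;> norm_cast at hS
  refine ⟨?_, hl2⟩
  have h := S_eval_add_mul_sub (mul_inv_cancel₀ hl) n
  rw [hS, zero_mul, eq_comm, sub_eq_zero] at h
  rw [two_mul, pow_add]
  nth_rewrite 2 [h]
  rw [← mul_pow, mul_inv_cancel₀ hl, one_pow]

end Matrix

theorem MvPolynomial.aeval_pow_eq_zero_of_coprime {K σ : Type*} [Field K] [CharZero K]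
    {ζ : K} {m : ℕ} [NeZero m] (hζ : IsPrimitiveRoot ζ m) {x : σ → K} (hx : ∀ i, x i ^ m = 1)
    {k : ℕ} (hk : k.Coprime m) {P : MvPolynomial σ ℚ} (hP : aeval x P = 0) :
    aeval (fun i ↦ x i ^ k) P = 0 := by
  choose e _ he using fun i ↦ hζ.eq_pow_of_pow_eq_one (hx i)
  set f : ℚ[X] := aeval (fun i ↦ (Polynomial.X : ℚ[X]) ^ e i) P
  have hf (z : K) : Polynomial.aeval z f = aeval (fun i ↦ z ^ e i) P := by
    simp only [f, ← AlgHom.comp_apply, comp_aeval, map_pow, Polynomial.aeval_X]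
  have hminpoly : minpoly ℚ (ζ ^ k) = minpoly ℚ ζ := by
    rw [← cyclotomic_eq_minpoly_rat hζ (NeZero.pos m),
      ← cyclotomic_eq_minpoly_rat (hζ.pow_of_coprime k hk) (NeZero.pos m)]
  have hζf : Polynomial.aeval ζ f = 0 := by
    rw [hf]; simpa only [he] using hP
  have hζkf : Polynomial.aeval (ζ ^ k) f = 0 :=
    aeval_eq_zero_of_dvd_aeval_eq_zero (hminpoly ▸ minpoly.dvd ℚ ζ hζf) (minpoly.aeval ℚ _)
  have hxk (i : σ) : (ζ ^ k) ^ e i = x i ^ k := by rw [← he i, ← pow_mul, ← pow_mul, mul_comm]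
  simpa only [hf, hxk] using hζkf

theorem IsPrimitiveRoot.exists_coprime_pow_eq {R : Type*} [CommRing R] [IsDomain R] {q w : R}
    {r m : ℕ} [NeZero m] (hq : IsPrimitiveRoot q r) (hw : IsPrimitiveRoot w r) (hrm : r ∣ m) :
    ∃ k, k.Coprime m ∧ q ^ k = w := by
  have : NeZero r := ⟨fun h ↦ NeZero.ne m (Nat.eq_zero_of_zero_dvd (h ▸ hrm))⟩
  obtain ⟨j, -, rfl⟩ := hq.eq_pow_of_pow_eq_one hw.pow_eq_one
  have hj : j.Coprime r := (hq.pow_iff_coprime (NeZero.pos r) j).mp hw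
  obtain ⟨u, hu⟩ := ZMod.unitsMap_surjective hrm (ZMod.unitOfCoprime j hj)
  refine ⟨(u : ZMod m).val, ZMod.val_coe_unit_coprime u, ?_⟩
  rw [← pow_mod_orderOf, ← pow_mod_orderOf q j, ← hq.eq_orderOf]
  congr 1
  rw [← ZMod.natCast_eq_natCast_iff', ZMod.natCast_val]
  simpa [ZMod.unitsMap_def] using congr_arg Units.val hu

theorem Nat.exists_coprime_lt_three_mul_lt {r : ℕ} (h5 : 5 ≤ r) (h6 : r ≠ 6) (h10 : r ≠ 10) :
    ∃ k, k.Coprime r ∧ r < 3 * k ∧ 3 * k < 2 * r := by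
  have key (k e : ℕ) (hr : r = k * 2 + 2 ^ e) (hk : e = 0 ∨ Odd k) : k.Coprime r := by
    rw [hr, Nat.coprime_mul_left_add_right]
    rcases hk with rfl | hk
    · exact Nat.coprime_one_right k
    · exact .pow_right e (Nat.coprime_two_right.mpr hk)
  obtain h | h | h : r % 2 = 1 ∨ r % 4 = 0 ∨ r % 4 = 2 := by omega
  · exact ⟨r / 2, key _ 0 (by omega) (.inl rfl), by omega, by omega⟩
  · exact ⟨r / 2 - 1, key _ 1 (by omega) (.inr ⟨r / 4 - 1, by omega⟩), by omega, by omega⟩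
  · exact ⟨r / 2 - 2, key _ 2 (by omega) (.inr ⟨r / 4 - 1, by omega⟩), by omega, by omega⟩

open Real in
theorem Real.cos_lt_neg_half_of_mem_Ioo {θ : ℝ} (h₁ : 2 * π / 3 < θ) (h₂ : θ < 4 * π / 3) :
    cos θ < -(1 / 2) := by
  have hθ : |θ - π| < π / 3 := abs_sub_lt_iff.mpr ⟨by linarith, by linarith⟩
  have := cos_lt_cos_of_nonneg_of_le_pi (abs_nonneg _) (by linarith [pi_pos]) hθ
  rw [cos_abs, cos_sub_pi, cos_pi_div_three] at this
  linarith

namespace Complex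

open Real in
theorem exists_isPrimitiveRoot_re_lt {r : ℕ} (h5 : 5 ≤ r) (h6 : r ≠ 6) (h10 : r ≠ 10) :
    ∃ w : ℂ, IsPrimitiveRoot w r ∧ w.re < -(1 / 2) := by
  obtain ⟨k, hk, h₁, h₂⟩ := Nat.exists_coprime_lt_three_mul_lt h5 h6 h10
  refine ⟨_, isPrimitiveRoot_exp_of_coprime k r (by omega) hk, ?_⟩
  have hr : (0 : ℝ) < r := by positivity
  have h₁' : (r : ℝ) < 3 * k := by exact_mod_cast h₁
  have h₂' : 3 * (k : ℝ) < 2 * r := by exact_mod_cast h₂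
  rw [show 2 * π * I * (k / r) = ((2 * π * k / r : ℝ) : ℂ) * I by push_cast; ring,
    exp_ofReal_mul_I_re]
  apply Real.cos_lt_neg_half_of_mem_Ioo
  · rw [div_lt_div_iff₀ (by norm_num) hr]; nlinarith [pi_pos]
  · rw [div_lt_div_iff₀ hr (by norm_num)]; nlinarith [pi_pos]

theorem norm_add_inv_le_two {z : ℂ} (hz : ‖z‖ = 1) : ‖z + z⁻¹‖ ≤ 2 :=
  calc ‖z + z⁻¹‖ ≤ ‖z‖ + ‖z⁻¹‖ := norm_add_le _ _
    _ = 2 := by rw [norm_inv, hz]; norm_num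

theorem add_inv_eq_two_mul_re {z : ℂ} (hz : ‖z‖ = 1) : z + z⁻¹ = 2 * z.re := by
  rw [inv_eq_conj hz, add_conj]; push_cast; ring

theorem exists_add_inv_eq (t : ℂ) : ∃ l ≠ 0, l + l⁻¹ = t := by
  obtain ⟨z, hz⟩ := IsAlgClosed.exists_eq_mul_self (t ^ 2 - 4)
  have hprod : (t + z) / 2 * ((t - z) / 2) = 1 := by linear_combination hz / 4
  refine ⟨(t + z) / 2, left_ne_zero_of_mul_eq_one hprod, ?_⟩
  rw [inv_eq_of_mul_eq_one_right hprod]; ring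

end Complex

open MvPolynomial in
noncomputable def addInvRelPoly : MvPolynomial (Fin 2) ℚ :=
  X 1 ^ 2 * X 0 ^ 2 + X 0 ^ 2 - X 1 * (X 0 ^ 2 + 1) ^ 2 + X 1 * X 0 * (X 0 ^ 2 + 1)

theorem aeval_addInvRelPoly_eq_zero_iff {K : Type*} [Field K] [CharZero K] {x : Fin 2 → K}
    (h₀ : x 0 ≠ 0) (h₁ : x 1 ≠ 0) :
    MvPolynomial.aeval x addInvRelPoly = 0 ↔
      x 1 + (x 1)⁻¹ = (x 0 + (x 0)⁻¹) ^ 2 - (x 0 + (x 0)⁻¹) := by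
  simp only [addInvRelPoly, map_add, map_sub, map_mul, map_pow, MvPolynomial.aeval_X, map_one]
  constructor <;> intro h
  · field_simp; linear_combination h
  · field_simp at h; linear_combination h

theorem add_inv_eq_of_coprime {q l : ℂ} {m k : ℕ} [NeZero m] (hq : q ^ m = 1) (hl : l ^ m = 1)
    (hk : k.Coprime m) (h : l + l⁻¹ = (q + q⁻¹) ^ 2 - (q + q⁻¹)) :
    l ^ k + (l ^ k)⁻¹ = (q ^ k + (q ^ k)⁻¹) ^ 2 - (q ^ k + (q ^ k)⁻¹) := by
  have hq0 : q ≠ 0 := ne_zero_pow (NeZero.ne m) (by simp [hq])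
  have hl0 : l ≠ 0 := ne_zero_pow (NeZero.ne m) (by simp [hl])
  have hx : ∀ i, ![q, l] i ^ m = 1 := Fin.forall_fin_two.mpr ⟨hq, hl⟩
  have hconj := MvPolynomial.aeval_pow_eq_zero_of_coprime
    (Complex.isPrimitiveRoot_exp m (NeZero.ne m)) hx hk
    ((aeval_addInvRelPoly_eq_zero_iff (x := ![q, l]) hq0 hl0).mpr h)
  rwa [aeval_addInvRelPoly_eq_zero_iff (by simpa using pow_ne_zero k hq0)
    (by simpa using pow_ne_zero k hl0)] at hconj

theorem IsPrimitiveRoot.add_inv_eq_neg_one {K : Type*} [Field K] {q : K}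
    (hq : IsPrimitiveRoot q 3) : q + q⁻¹ = -1 := by
  have hq0 : q ≠ 0 := hq.ne_zero (by norm_num)
  have hsum := hq.geom_sum_eq_zero (by norm_num)
  simp only [Finset.sum_range_succ, Finset.sum_range_zero] at hsum
  field_simp
  linear_combination hsum

theorem eq_one_of_add_inv_eq_two {K : Type*} [Field K] {l : K} (hl : l ≠ 0)
    (h : l + l⁻¹ = 2) : l = 1 := by
  have hsq : (l - 1) ^ 2 = 0 := by field_simp at h; linear_combination h
  exact sub_eq_zero.mp (pow_eq_zero_iff two_ne_zero |>.mp hsq)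

theorem Complex.two_lt_norm_add_inv_sq_sub {w : ℂ} (hw : ‖w‖ = 1) (hre : w.re < -(1 / 2)) :
    2 < ‖(w + w⁻¹) ^ 2 - (w + w⁻¹)‖ := by
  rw [add_inv_eq_two_mul_re hw]
  have hreal : ((2 * w.re) ^ 2 - 2 * w.re : ℂ) = ((2 * w.re) ^ 2 - 2 * w.re : ℝ) := by push_cast; rfl
  rw [hreal, norm_real, Real.norm_eq_abs]
  exact lt_abs.mpr (.inl (by nlinarith))

theorem add_inv_ne_of_isPrimitiveRoot {q l : ℂ} {r M : ℕ} (hq : IsPrimitiveRoot q r)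
    (hr3 : 3 ≤ r) (hr : r ∉ ({4, 6, 10} : Set ℕ)) (hM : M ≠ 0) (hl : l ^ M = 1) (hl2 : l ^ 2 ≠ 1) :
    l + l⁻¹ ≠ (q + q⁻¹) ^ 2 - (q + q⁻¹) := by
  simp only [Set.mem_insert_iff, Set.mem_singleton_iff, not_or] at hr
  obtain ⟨h4, h6, h10⟩ := hr
  intro h
  rcases eq_or_lt_of_le hr3 with rfl | hr5
  · rw [hq.add_inv_eq_neg_one] at h
    norm_num at h
    exact hl2 (by rw [eq_one_of_add_inv_eq_two (ne_zero_pow hM (by simp [hl])) h, one_pow])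
  obtain ⟨w, hw, hwre⟩ := Complex.exists_isPrimitiveRoot_re_lt (by omega) h6 h10
  have : NeZero (r * M) := ⟨by positivity⟩
  obtain ⟨k, hk, rfl⟩ := hq.exists_coprime_pow_eq hw (dvd_mul_right r M)
  have hconj := add_inv_eq_of_coprime (by rw [pow_mul, hq.pow_eq_one, one_pow])
    (by rw [mul_comm, pow_mul, hl, one_pow]) hk h
  have hlk : ‖l ^ k‖ = 1 :=
    Complex.norm_eq_one_of_pow_eq_one (by rw [← pow_mul, mul_comm, pow_mul, hl, one_pow]) hM
  have hbound := Complex.norm_add_inv_le_two hlk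
  rw [hconj] at hbound
  exact (Complex.two_lt_norm_add_inv_sq_sub (hw.norm'_eq_one (by omega)) hwre).not_ge hbound

theorem sq_mul_inv_sq_eq {K : Type*} [Field K] {A : K} (hA : A ≠ 0) :
    (!![-A ^ 3, A; 0, A⁻¹] : Matrix (Fin 2) (Fin 2) K) ^ 2 *
        ((!![A⁻¹, 0; A, -A ^ 3] : Matrix (Fin 2) (Fin 2) K)⁻¹) ^ 2 =
      !![A ^ 8 - A ^ 4 - A⁻¹ ^ 4 + 2, (1 - A ^ 4) * A⁻¹ ^ 6; A⁻¹ ^ 2 - A⁻¹ ^ 6, A⁻¹ ^ 8] := by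
  rw [Matrix.inv_def, Matrix.det_fin_two_of, Matrix.adjugate_fin_two_of]
  simp only [sq, Matrix.smul_of, Matrix.mul_fin_two]
  ext i j
  fin_cases i <;> fin_cases j <;> simp [Ring.inverse_eq_inv'] <;> field_simp <;> ring

theorem stmt_17 (A : ℂ) (hA : A ≠ 0) (r : ℕ) (hr : orderOf (A ^ 4) = r)
    (hr3 : 3 ≤ r) (hrnot : r ∉ ({4, 6, 10} : Set ℕ)) :
    ∀ N : ℕ, 0 < N → ∀ c : ℂ,
      ((!![-A ^ 3, A; 0, A⁻¹] : Matrix (Fin 2) (Fin 2) ℂ) ^ 2 *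
        ((!![A⁻¹, 0; A, -A ^ 3] : Matrix (Fin 2) (Fin 2) ℂ)⁻¹) ^ 2) ^ N ≠
      c • (1 : Matrix (Fin 2) (Fin 2) ℂ) := by
  intro N hN c hc
  have hq : IsPrimitiveRoot (A ^ 4) r := hr ▸ IsPrimitiveRoot.orderOf (A ^ 4)
  generalize hM : (_ ^ 2 * _ ^ 2 : Matrix (Fin 2) (Fin 2) ℂ) = M at hc
  rw [sq_mul_inv_sq_eq hA] at hM
  have hdet : M.det = 1 := by
    rw [← hM, Matrix.det_fin_two_of]; field_simp; ring
  have h01 : M 0 1 ≠ 0 := by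
    rw [← hM]
    exact mul_ne_zero (sub_ne_zero.mpr (hq.ne_one (by omega)).symm) (by simpa using hA)
  have htr : M.trace = (A ^ 4 + (A ^ 4)⁻¹) ^ 2 - (A ^ 4 + (A ^ 4)⁻¹) := by
    rw [← hM, Matrix.trace_fin_two_of]; field_simp; ring
  obtain ⟨l, hl0, hl⟩ := Complex.exists_add_inv_eq M.trace
  obtain ⟨hl2N, hl2⟩ := Matrix.pow_two_mul_eq_one_of_pow_eq_smul_one hdet h01 hN.ne' hc hl0 hl.symm
  exact add_inv_ne_of_isPrimitiveRoot hq hr3 hrnot (by omega) hl2N hl2 (hl.trans htr)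
end
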